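/- For every integer k ≥ 0, the Tuenter polynomial P_k(x) has degree exactly k, and its leading coefficient (the coefficient of x^k) equals k!. -/
import Mathlib
open Polynomial

lemma aux_coeff_comp (q : Polynomial ℚ) (n : ℕ) (h : q.natDegree ≤ n + 1) :
    (q.comp (X - C 1)).coeff n = q.coeff n - (n + 1) * q.coeff (n + 1) := by
  have hx : (X - C 1 : Polynomial ℚ) = X + C (-1) := by simp [sub_eq_add_neg]
  have key : ∀ m, ((X - C (1:ℚ)) ^ m).coeff n = ((-1:ℚ))^(m-n) * (m.choose n : ℚ) := by
    intro m; rw [hx, coeff_X_add_C_pow]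
  rw [comp_eq_sum_left, Polynomial.sum]
  rw [finset_sum_coeff]
  have hsub : q.support ⊆ Finset.range (n + 2) := by
    intro m hm
    simp only [Finset.mem_range]
    exact lt_of_le_of_lt (le_natDegree_of_mem_supp m hm) (by omega)
  rw [Finset.sum_subset hsub (fun m _ hm => by
    simp [Polynomial.notMem_support_iff.mp hm])]
  rw [Finset.sum_range_succ, Finset.sum_range_succ]
  have h0 : ∀ m ∈ Finset.range n, (C (q.coeff m) * (X - C (1:ℚ)) ^ m).coeff n = 0 := by
    intro m hm
    rw [coeff_C_mul, key]
    simp [Nat.choose_eq_zero_of_lt (Finset.mem_range.mp hm)]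
  rw [Finset.sum_eq_zero h0, zero_add, coeff_C_mul, coeff_C_mul, key, key]
  simp [Nat.choose_succ_self_right]
  ring

/-- The Tuenter polynomials: `P 0 = 1`, `P (k+1) (x) = x^2 (P k (x) - P k (x-1)) + x P k (x-1)`. -/
noncomputable def P : ℕ → Polynomial ℚ
  | 0 => 1
  | k + 1 =>
      X ^ 2 * (P k - (P k).comp (X - Polynomial.C 1)) + X * (P k).comp (X - Polynomial.C 1)

lemma P_strong (k : ℕ) :
    (P k).natDegree ≤ k ∧ (P k).coeff k = (Nat.factorial k : ℚ) := by
  induction k with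
  | zero => simp [P]
  | succ k ih =>
    obtain ⟨hd, hc⟩ := ih
    set Q := (P k).comp (X - C 1) with hQdef
    set D := P k - Q with hDdef
    have hdQ : Q.natDegree ≤ k := by
      rw [hQdef, natDegree_comp, natDegree_X_sub_C, mul_one]
      exact hd
    have htop : (P k).coeff (k + 1) = 0 := coeff_eq_zero_of_natDegree_lt (by omega)
    have hQk : Q.coeff k = (Nat.factorial k : ℚ) := by
      rw [hQdef, aux_coeff_comp _ _ (by omega), htop]
      simp [hc]
    have hDk : D.coeff k = 0 := by
      rw [hDdef, coeff_sub, hQk, hc, sub_self]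
    have hdD : D.natDegree ≤ k := le_trans (natDegree_sub_le _ _) (by omega)
    have hP : P (k+1) = X ^ 2 * D + X * Q := rfl
    have hcoeff : ∀ m, 2 ≤ m → (P (k+1)).coeff m = D.coeff (m - 2) + Q.coeff (m - 1) := by
      intro m hm
      obtain ⟨d, rfl⟩ : ∃ d, m = d + 2 := ⟨m - 2, by omega⟩
      rw [hP, coeff_add, coeff_X_pow_mul]
      have : d + 2 = (d + 1) + 1 := by omega
      rw [this, coeff_X_mul]
      simp
    constructor
    · rw [natDegree_le_iff_coeff_eq_zero]
      intro m hm
      rw [hcoeff m (by omega)]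
      have hq0 : Q.coeff (m - 1) = 0 := coeff_eq_zero_of_natDegree_lt (by omega)
      rcases eq_or_lt_of_le (show k ≤ m - 2 by omega) with h | h
      · rw [← h, hDk, hq0, add_zero]
      · rw [coeff_eq_zero_of_natDegree_lt (by omega), hq0, add_zero]
    · cases k with
      | zero =>
        have : (P 1).coeff 1 = D.coeff 0 + Q.coeff 0 := by
          rw [hP, coeff_add]
          rw [show (X : Polynomial ℚ) ^ 2 * D = X * (X * D) by ring, coeff_X_mul]
          rw [coeff_X_mul]
          simp [coeff_X_mul, hDk]
        rw [this]
        have hD0 : D = 0 := by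
          have : P 0 = 1 := rfl
          simp [hDdef, hQdef, this]
        rw [hDk, zero_add, hQk]
        norm_num
      | succ j =>
        rw [hcoeff (j + 2) (by omega)]
        simp only [Nat.add_sub_cancel]
        have hQj : Q.coeff j = (P (j+1)).coeff j - (j + 1) * (P (j+1)).coeff (j+1) :=
          aux_coeff_comp _ _ (by omega)
        have : D.coeff j = (j + 1) * (P (j+1)).coeff (j+1) := by
          rw [hDdef, coeff_sub, hQj]; ring
        rw [this, show j + 2 - 1 = j + 1 by omega, hQk, hc]
        have hf : ((j+1+1).factorial : ℚ) = (j+2) * (j+1).factorial := by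
          rw [Nat.factorial_succ (j+1)]; push_cast; ring
        rw [hf]
        ring

theorem P_degree_and_leading_coeff (k : ℕ) :
    (P k).degree = (k : ℕ) ∧ (P k).coeff k = (Nat.factorial k : ℚ) := by
  obtain ⟨hd, hc⟩ := P_strong k
  have hne : (P k).coeff k ≠ 0 := by
    rw [hc]; exact_mod_cast Nat.factorial_ne_zero k
  have h1 : k ≤ (P k).natDegree := le_natDegree_of_ne_zero hne
  have h2 : (P k).natDegree = k := le_antisymm hd h1
  have hp : P k ≠ 0 := fun h => hne (by simp [h])
  refine ⟨?_, hc⟩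
  rw [degree_eq_natDegree hp, h2]
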